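/- Let n ≥ 2, let G be a semispray on ℝⁿ, let c : I → ℝⁿ be a geodesic of G, and let V : I × (−ε,ε)^{n−1} → ℝⁿ be an (n−1)-parameter geodesic variation of c which is a C^∞ diffeomorphism onto its image U (an open subset of ℝⁿ). Let Z : U → ℝⁿ be the vector field induced by ∂/∂t, i.e. Z(V(t,s)) = ∂_tV(t,s), and set A(t) = A_Z(c(t)). Then along c the tensor Riccati equation holds: A'(t) + N(t)∘A(t) − A(t)∘N(t) + A(t)∘A(t) + Φ(t) = 0 for all t ∈ I. -/

import Mathlib

noncomputable section

/-- Euclidean coordinate space `ℝⁿ`. -/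
abbrev En (n : ℕ) : Type := Fin n → ℝ

/-- A semispray on `ℝⁿ` in coordinates: a map `G : ℝⁿ × (ℝⁿ ∖ {0}) → ℝⁿ` that is
`C^∞` on the set where the second (velocity) variable is nonzero. -/
def IsSemispray (n : ℕ) (G : En n × En n → En n) : Prop :=
  ContDiffOn ℝ (⊤ : ℕ∞) G {p : En n × En n | p.2 ≠ 0}

/-- A spray: a semispray that is positively `2`-homogeneous in the velocity variable. -/
def IsSpray (n : ℕ) (G : En n × En n → En n) : Prop :=
  IsSemispray n G ∧
    ∀ (x y : En n), y ≠ 0 → ∀ l : ℝ, 0 < l → G (x, l • y) = l ^ 2 • G (x, y)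

/-- `c` is a geodesic of the semispray `G` on the set `I`:
`c` is `C^∞` on `I`, regular, and `c'' + 2 G(c, c') = 0` on `I`. -/
def IsGeodesicOn (n : ℕ) (G : En n × En n → En n) (c : ℝ → En n) (I : Set ℝ) : Prop :=
  ContDiffOn ℝ (⊤ : ℕ∞) c I ∧ (∀ t ∈ I, deriv c t ≠ 0) ∧
    ∀ t ∈ I, deriv (deriv c) t + (2 : ℝ) • G (c t, deriv c t) = 0

/-- Partial Fréchet derivative of `G` in its first (base) variable. -/
def DxG (n : ℕ) (G : En n × En n → En n) (x y : En n) : En n →L[ℝ] En n :=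
  fderiv ℝ (fun x' => G (x', y)) x

/-- Partial Fréchet derivative of `G` in its second (velocity) variable. -/
def DyG (n : ℕ) (G : En n × En n → En n) (x y : En n) : En n →L[ℝ] En n :=
  fderiv ℝ (fun y' => G (x, y')) y

/-- `N(t) = D_yG(c(t), c'(t))` along a curve `c`. -/
def Nc (n : ℕ) (G : En n × En n → En n) (c : ℝ → En n) (t : ℝ) : En n →L[ℝ] En n :=
  DyG n G (c t) (deriv c t)

/-- Dynamical covariant derivative `∇v = v' + N·v` of a vector field `v` along `c`. -/
def covV (n : ℕ) (G : En n × En n → En n) (c : ℝ → En n) (v : ℝ → En n) (t : ℝ) : En n :=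
  deriv v t + Nc n G c t (v t)

/-- Dynamical covariant derivative `∇J = J' + N∘J − J∘N` of an endomorphism field `J`
along `c`. -/
def covE (n : ℕ) (G : En n × En n → En n) (c : ℝ → En n)
    (J : ℝ → En n →L[ℝ] En n) (t : ℝ) : En n →L[ℝ] En n :=
  deriv J t + (Nc n G c t).comp (J t) - (J t).comp (Nc n G c t)

/-- Jacobi endomorphism `Φ = 2 D_xG(c,c') − N' − N∘N` along `c`. -/
def Phi (n : ℕ) (G : En n × En n → En n) (c : ℝ → En n) (t : ℝ) : En n →L[ℝ] En n :=
  (2 : ℝ) • DxG n G (c t) (deriv c t) - deriv (fun t' => Nc n G c t') t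
    - (Nc n G c t).comp (Nc n G c t)

/-- A parallel vector field along `c` on `I`: `∇v = v' + N·v = 0`. -/
def IsParallel (n : ℕ) (G : En n × En n → En n) (c : ℝ → En n) (I : Set ℝ)
    (v : ℝ → En n) : Prop :=
  ContDiffOn ℝ (⊤ : ℕ∞) v I ∧ ∀ t ∈ I, deriv v t + Nc n G c t (v t) = 0

/-- A Jacobi field along a geodesic `c` on `I`:
`j'' + 2 D_yG(c,c')·j' + 2 D_xG(c,c')·j = 0`. -/
def IsJacobiField (n : ℕ) (G : En n × En n → En n) (c : ℝ → En n) (I : Set ℝ)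
    (j : ℝ → En n) : Prop :=
  ContDiffOn ℝ (⊤ : ℕ∞) j I ∧ ∀ t ∈ I,
    deriv (deriv j) t + (2 : ℝ) • DyG n G (c t) (deriv c t) (deriv j t)
      + (2 : ℝ) • DxG n G (c t) (deriv c t) (j t) = 0

/-- A Jacobi tensor along `c` on `I`: a `C^∞` endomorphism field with `∇²J + Φ∘J = 0`. -/
def IsJacobiTensor (n : ℕ) (G : En n × En n → En n) (c : ℝ → En n) (I : Set ℝ)
    (J : ℝ → En n →L[ℝ] En n) : Prop :=
  ContDiffOn ℝ (⊤ : ℕ∞) J I ∧ ∀ t ∈ I,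
    covE n G c (fun t' => covE n G c J t') t + (Phi n G c t).comp (J t) = 0

/-- The open cube `(−ε, ε)^k`. -/
def cube (k : ℕ) (ε : ℝ) : Set (Fin k → ℝ) := {s | ∀ i, |s i| < ε}

/-- A `k`-parameter geodesic variation of the geodesic `c` on `I`:
a `C^∞` map `V : I × (−ε,ε)^k → ℝⁿ` with `V(t,0) = c(t)` and every `t ↦ V(t,s)`
a geodesic of `G` on `I`. -/
def IsGeodesicVariation (n : ℕ) (G : En n × En n → En n) (c : ℝ → En n) (I : Set ℝ)
    (k : ℕ) (ε : ℝ) (V : ℝ × (Fin k → ℝ) → En n) : Prop :=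
  ContDiffOn ℝ (⊤ : ℕ∞) V (I ×ˢ cube k ε) ∧ (∀ t ∈ I, V (t, 0) = c t) ∧
    ∀ s ∈ cube k ε, IsGeodesicOn n G (fun t => V (t, s)) I

/-- `∂_{s^a} V (t, 0)`: the variation vector field in direction `a` along the base curve. -/
def dS (n k : ℕ) (V : ℝ × (Fin k → ℝ) → En n) (a : Fin k) (t : ℝ) : En n :=
  fderiv ℝ (fun s => V (t, s)) 0 (Pi.single a 1)

/-- The shape-operator-type tensor `A_Z(x) = DZ(x) + D_yG(x, Z(x))` associated to a
vector field `Z` (the coordinate form of `K ∘ DZ`). -/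
def AZ (n : ℕ) (G : En n × En n → En n) (Z : En n → En n) (x : En n) : En n →L[ℝ] En n :=
  fderiv ℝ Z x + DyG n G x (Z x)

/-!
Because every curve `t ↦ V(t, s)` is a geodesic and `Z` is its velocity field, `Z` is a geodesic
field on the open image `U`: `DZ(x) Z(x) + 2 G(x, Z(x)) = 0`. Differentiating this identity in a
direction `w` at `c(t)` and using the symmetry of `D²Z` gives
`D²Z(c') w = -(DZ DZ w + 2 D_xG w + 2 N DZ w)`. Along `c` one has `Z ∘ c = c'`, so
`A = DZ + N` and `A' = D²Z(c') + N'`; substituting, the Riccati expression collapses to this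
identity.
-/

open Filter Topology ContinuousLinearMap

lemma isOpen_cube (k : ℕ) (ε : ℝ) : IsOpen (cube k ε) := by
  have : cube k ε = Set.pi Set.univ (fun _ => Metric.ball (0 : ℝ) ε) := by
    ext s; simp [cube]
  rw [this]
  exact isOpen_set_pi Set.finite_univ fun _ _ => Metric.isOpen_ball

lemma zero_mem_cube (k : ℕ) {ε : ℝ} (hε : 0 < ε) : (0 : Fin k → ℝ) ∈ cube k ε :=
  fun _ => by simpa using hε

section General

variable {𝕜 : Type*} [NontriviallyNormedField 𝕜]
  {E F P : Type*} [NormedAddCommGroup E] [NormedSpace 𝕜 E] [NormedAddCommGroup F]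
  [NormedSpace 𝕜 F] [NormedAddCommGroup P] [NormedSpace 𝕜 P]

lemma ContDiffOn.of_comp_of_leftInvOn {k : WithTop ℕ∞} {Ω : Set P} {V : P → E} {g : E → P}
    {Z : E → F} {Φ : P → F} (hΦ : ContDiffOn 𝕜 k Φ Ω) (hg : ContDiffOn 𝕜 k g (V '' Ω))
    (hgV : ∀ p ∈ Ω, g (V p) = p) (hZV : ∀ p ∈ Ω, Z (V p) = Φ p) :
    ContDiffOn 𝕜 k Z (V '' Ω) := by
  have hmaps : Set.MapsTo g (V '' Ω) Ω := by
    rintro _ ⟨p, hp, rfl⟩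
    rwa [hgV p hp]
  refine (hΦ.comp hg hmaps).congr ?_
  rintro _ ⟨p, hp, rfl⟩
  simp [hgV p hp, hZV p hp]

lemma DifferentiableAt.deriv_partial_fst {V : 𝕜 × P → F} {p : 𝕜 × P}
    (hV : DifferentiableAt 𝕜 V p) :
    deriv (fun t => V (t, p.2)) p.1 = fderiv 𝕜 V p (1, 0) :=
  (hV.hasFDerivAt.comp_hasDerivAt p.1
    ((hasDerivAt_id p.1).prodMk (hasDerivAt_const p.1 p.2))).deriv

end General

/-- The integral curves of `Z` in `U` are geodesics of `G`: along them `c'' = DZ(c) c'`. -/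
def IsGeodesicField (n : ℕ) (G : En n × En n → En n) (Z : En n → En n) (U : Set (En n)) :
    Prop :=
  ∀ x ∈ U, fderiv ℝ Z x (Z x) + (2 : ℝ) • G (x, Z x) = 0

section Semispray

variable {n : ℕ} {G : En n × En n → En n}

lemma DxG_eq_fderiv_comp_inl {x y : En n} (hG : DifferentiableAt ℝ G (x, y)) :
    DxG n G x y = (fderiv ℝ G (x, y)).comp (inl ℝ (En n) (En n)) :=
  (hG.hasFDerivAt.comp x (hasFDerivAt_prodMk_left x y)).fderiv

lemma DyG_eq_fderiv_comp_inr {x y : En n} (hG : DifferentiableAt ℝ G (x, y)) :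
    DyG n G x y = (fderiv ℝ G (x, y)).comp (inr ℝ (En n) (En n)) :=
  (hG.hasFDerivAt.comp y (hasFDerivAt_prodMk_right x y)).fderiv

lemma fderiv_apply_eq_DxG_add_DyG {x y : En n} (hG : DifferentiableAt ℝ G (x, y))
    (v w : En n) : fderiv ℝ G (x, y) (v, w) = DxG n G x y v + DyG n G x y w := by
  rw [DxG_eq_fderiv_comp_inl hG, DyG_eq_fderiv_comp_inr hG]
  exact ((fderiv ℝ G (x, y)).comp_inl_add_comp_inr (v, w)).symm

lemma differentiableAt_Nc {c : ℝ → En n} {t : ℝ} (hc : ContDiffAt ℝ 2 c t)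
    (hG : ContDiffAt ℝ 2 G (c t, deriv c t)) : DifferentiableAt ℝ (Nc n G c) t := by
  have hlift : DifferentiableAt ℝ (fun s => (c s, deriv c s)) t :=
    (hc.differentiableAt two_ne_zero).prodMk
      ((hc.derivWithin (m := 1) (by norm_num)).differentiableAt one_ne_zero)
  have hG_near : ∀ᶠ s in 𝓝 t, DifferentiableAt ℝ G (c s, deriv c s) :=
    hlift.continuousAt.eventually
      ((hG.eventually (by simp)).mono fun _ h => h.differentiableAt two_ne_zero)
  have hN : Nc n G c =ᶠ[𝓝 t] fun s => (fderiv ℝ G (c s, deriv c s)).comp (inr ℝ _ _) :=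
    hG_near.mono fun s hs => DyG_eq_fderiv_comp_inr hs
  refine DifferentiableAt.congr_of_eventuallyEq ?_ hN
  exact ((((hG.fderiv_right (m := 1) (by norm_num)).differentiableAt one_ne_zero).comp t
    hlift).clm_comp (differentiableAt_const _))

lemma IsGeodesicOn.geodesicField_apply {Z : En n → En n} {γ : ℝ → En n} {I : Set ℝ} {t : ℝ}
    (hγ : IsGeodesicOn n G γ I) (hI : IsOpen I) (ht : t ∈ I)
    (hZ : DifferentiableAt ℝ Z (γ t)) (hZγ : ∀ s ∈ I, Z (γ s) = deriv γ s) :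
    fderiv ℝ Z (γ t) (Z (γ t)) + (2 : ℝ) • G (γ t, Z (γ t)) = 0 := by
  have hγt : DifferentiableAt ℝ γ t :=
    (hγ.1.contDiffAt (hI.mem_nhds ht)).differentiableAt (by simp)
  have hγ' : deriv γ =ᶠ[𝓝 t] Z ∘ γ :=
    eventually_of_mem (hI.mem_nhds ht) fun s hs => (hZγ s hs).symm
  have hγ'' : deriv (deriv γ) t = fderiv ℝ Z (γ t) (Z (γ t)) := by
    rw [hγ'.deriv_eq, fderiv_comp_deriv t hZ hγt, hZγ t ht]
  rw [← hγ'', hZγ t ht]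
  exact hγ.2.2 t ht

lemma IsGeodesicField.fderiv_fderiv_apply {Z : En n → En n} {U : Set (En n)} {x : En n}
    (hZ : IsGeodesicField n G Z U) (hU : U ∈ 𝓝 x) (hZx : ContDiffAt ℝ 2 Z x)
    (hG : DifferentiableAt ℝ G (x, Z x)) (w : En n) :
    fderiv ℝ (fderiv ℝ Z) x w (Z x) = -(fderiv ℝ Z x (fderiv ℝ Z x w)
      + (2 : ℝ) • DxG n G x (Z x) w + (2 : ℝ) • DyG n G x (Z x) (fderiv ℝ Z x w)) := by
  have hDZ : HasFDerivAt (fderiv ℝ Z) (fderiv ℝ (fderiv ℝ Z) x) x :=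
    ((hZx.fderiv_right (m := 1) le_rfl).differentiableAt one_ne_zero).hasFDerivAt
  have hZd : HasFDerivAt Z (fderiv ℝ Z x) x := (hZx.differentiableAt two_ne_zero).hasFDerivAt
  have hlhs := (hDZ.clm_apply hZd).add
    ((hG.hasFDerivAt.comp x ((hasFDerivAt_id x).prodMk hZd)).const_smul (2 : ℝ))
  have hrhs : HasFDerivAt (fun y => fderiv ℝ Z y (Z y) + (2 : ℝ) • G (y, Z y)) 0 x :=
    (hasFDerivAt_const (𝕜 := ℝ) (0 : En n) x).congr_of_eventuallyEq (eventually_of_mem hU hZ)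
  have h := congr($(hlhs.unique hrhs) w)
  simp only [add_apply, coe_comp, Function.comp_apply, flip_apply, smul_apply, zero_apply,
    prod_apply, coe_id', id_eq, fderiv_apply_eq_DxG_add_DyG hG] at h
  linear_combination (norm := module) h

lemma hasDerivAt_AZ_comp {Z : En n → En n} {c : ℝ → En n} {t : ℝ}
    (hZ : ContDiffAt ℝ 2 Z (c t)) (hc : DifferentiableAt ℝ c t)
    (hN : DifferentiableAt ℝ (Nc n G c) t) (hZc : ∀ᶠ s in 𝓝 t, Z (c s) = deriv c s) :
    HasDerivAt (fun s => AZ n G Z (c s))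
      (fderiv ℝ (fderiv ℝ Z) (c t) (deriv c t) + deriv (Nc n G c) t) t := by
  have hA : (fun s => AZ n G Z (c s)) =ᶠ[𝓝 t] fun s => fderiv ℝ Z (c s) + Nc n G c s :=
    hZc.mono fun s hs => by simp only [AZ, Nc, hs]
  have hDZ := ((hZ.fderiv_right (m := 1) le_rfl).differentiableAt one_ne_zero).hasFDerivAt
  exact ((hDZ.comp_hasDerivAt t hc.hasDerivAt).add hN.hasDerivAt).congr_of_eventuallyEq hA

theorem IsGeodesicField.riccati {Z : En n → En n} {U : Set (En n)} {c : ℝ → En n} {t : ℝ}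
    (hZ : IsGeodesicField n G Z U) (hU : U ∈ 𝓝 (c t)) (hZt : ContDiffAt ℝ 2 Z (c t))
    (hc : ContDiffAt ℝ 2 c t) (hG : ContDiffAt ℝ 2 G (c t, deriv c t))
    (hZc : ∀ᶠ s in 𝓝 t, Z (c s) = deriv c s) :
    deriv (fun s => AZ n G Z (c s)) t
      + (Nc n G c t).comp (AZ n G Z (c t)) - (AZ n G Z (c t)).comp (Nc n G c t)
      + (AZ n G Z (c t)).comp (AZ n G Z (c t)) + Phi n G c t = 0 := by
  have hZx : Z (c t) = deriv c t := hZc.self_of_nhds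
  have hA : AZ n G Z (c t) = fderiv ℝ Z (c t) + Nc n G c t := by rw [AZ, Nc, hZx]
  have hGd : DifferentiableAt ℝ G (c t, Z (c t)) := hZx ▸ hG.differentiableAt two_ne_zero
  rw [(hasDerivAt_AZ_comp hZt (hc.differentiableAt two_ne_zero) (differentiableAt_Nc hc hG)
    hZc).deriv, hA]
  ext1 w
  have hsymm := hZt.isSymmSndFDerivAt (by simp) (deriv c t) w
  have h2 := hZ.fderiv_fderiv_apply hU hZt hGd w
  rw [hZx, ← Nc] at h2
  simp only [Phi, add_apply, sub_apply, coe_comp, Function.comp_apply, smul_apply, zero_apply,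
    map_add, hsymm, h2]
  module

end Semispray

namespace IsGeodesicVariation

variable {n k : ℕ} {G : En n × En n → En n} {c : ℝ → En n} {I : Set ℝ} {ε : ℝ}
  {V : ℝ × (Fin k → ℝ) → En n} {Z : En n → En n}

lemma contDiffOn_field (hV : IsGeodesicVariation n G c I k ε V) (hI : IsOpen I)
    {g : En n → ℝ × (Fin k → ℝ)} (hg : ContDiffOn ℝ (⊤ : ℕ∞) g (V '' (I ×ˢ cube k ε)))
    (hgV : ∀ p ∈ I ×ˢ cube k ε, g (V p) = p)
    (hZ : ∀ p ∈ I ×ˢ cube k ε, Z (V p) = deriv (fun t => V (t, p.2)) p.1) :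
    ContDiffOn ℝ (⊤ : ℕ∞) Z (V '' (I ×ˢ cube k ε)) := by
  have hΩ : IsOpen (I ×ˢ cube k ε) := hI.prod (isOpen_cube k ε)
  have hΦ := (hV.1.fderiv_of_isOpen (m := (⊤ : ℕ∞)) hΩ (by simp)).clm_apply
    (contDiffOn_const (c := ((1 : ℝ), (0 : Fin k → ℝ))))
  refine hΦ.of_comp_of_leftInvOn hg hgV fun p hp => (hZ p hp).trans ?_
  exact ((hV.1.contDiffAt (hΩ.mem_nhds hp)).differentiableAt (by simp)).deriv_partial_fst

lemma isGeodesicField (hV : IsGeodesicVariation n G c I k ε V) (hI : IsOpen I)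
    (hU : IsOpen (V '' (I ×ˢ cube k ε))) (hZd : DifferentiableOn ℝ Z (V '' (I ×ˢ cube k ε)))
    (hZ : ∀ p ∈ I ×ˢ cube k ε, Z (V p) = deriv (fun t => V (t, p.2)) p.1) :
    IsGeodesicField n G Z (V '' (I ×ˢ cube k ε)) := by
  rintro _ ⟨⟨t, s⟩, hp, rfl⟩
  exact (hV.2.2 s hp.2).geodesicField_apply hI hp.1
    (hZd.differentiableAt (hU.mem_nhds ⟨_, hp, rfl⟩)) fun t' ht' => hZ (t', s) ⟨ht', hp.2⟩

lemma field_eq_deriv (hV : IsGeodesicVariation n G c I k ε V) (hI : IsOpen I) (hε : 0 < ε)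
    (hZ : ∀ p ∈ I ×ˢ cube k ε, Z (V p) = deriv (fun t => V (t, p.2)) p.1) {t : ℝ} (ht : t ∈ I) :
    Z (c t) = deriv c t := by
  have hc : (fun s => V (s, 0)) =ᶠ[𝓝 t] c := eventually_of_mem (hI.mem_nhds ht) hV.2.1
  rw [← hV.2.1 t ht, hZ (t, 0) ⟨ht, zero_mem_cube k hε⟩, hc.deriv_eq]

end IsGeodesicVariation

theorem shape_operator_riccati_general (n : ℕ)
    (G : En n × En n → En n) (hG : IsSemispray n G)
    (I : Set ℝ) (hIopen : IsOpen I)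
    (c : ℝ → En n) (hc : IsGeodesicOn n G c I)
    (ε : ℝ) (hε : 0 < ε) (V : ℝ × (Fin (n - 1) → ℝ) → En n)
    (hV : IsGeodesicVariation n G c I (n - 1) ε V)
    (hVopen : IsOpen (V '' (I ×ˢ cube (n - 1) ε)))
    (g : En n → ℝ × (Fin (n - 1) → ℝ))
    (hg : ContDiffOn ℝ (⊤ : ℕ∞) g (V '' (I ×ˢ cube (n - 1) ε)))
    (hgV : ∀ p ∈ I ×ˢ cube (n - 1) ε, g (V p) = p)
    (Z : En n → En n)
    (hZ : ∀ p ∈ I ×ˢ cube (n - 1) ε, Z (V p) = deriv (fun t' => V (t', p.2)) p.1) :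
    ∀ t ∈ I,
      deriv (fun t' => AZ n G Z (c t')) t
        + (Nc n G c t).comp (AZ n G Z (c t)) - (AZ n G Z (c t)).comp (Nc n G c t)
        + (AZ n G Z (c t)).comp (AZ n G Z (c t)) + Phi n G c t = 0 := by
  intro t ht
  have h2 : (2 : WithTop ℕ∞) ≤ (⊤ : ℕ∞) := WithTop.coe_le_coe.2 le_top
  have hZsm := hV.contDiffOn_field hIopen hg hgV hZ
  have hZgeo := hV.isGeodesicField hIopen hVopen (hZsm.differentiableOn (by simp)) hZ
  have hU : V '' (I ×ˢ cube (n - 1) ε) ∈ 𝓝 (c t) :=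
    hVopen.mem_nhds ⟨(t, 0), ⟨ht, zero_mem_cube _ hε⟩, hV.2.1 t ht⟩
  have hZc : ∀ᶠ s in 𝓝 t, Z (c s) = deriv c s :=
    eventually_of_mem (hIopen.mem_nhds ht) fun s hs => hV.field_eq_deriv hIopen hε hZ hs
  have hG_ct : ContDiffAt ℝ (⊤ : ℕ∞) G (c t, deriv c t) :=
    hG.contDiffAt ((isOpen_compl_singleton.preimage continuous_snd).mem_nhds (hc.2.1 t ht))
  exact hZgeo.riccati hU ((hZsm.contDiffAt hU).of_le h2)
    ((hc.1.contDiffAt (hIopen.mem_nhds ht)).of_le h2) (hG_ct.of_le h2) hZc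

/-- If an `(n−1)`-parameter geodesic variation of a geodesic `c` of a semispray is a
`C^∞` diffeomorphism onto its (open) image and `Z` is the vector field induced by
`∂/∂t` on the image, then `A(t) = A_Z(c(t))` satisfies the tensor Riccati equation
`A' + N∘A − A∘N + A∘A + Φ = 0` along `c`. -/
theorem shape_operator_riccati (n : ℕ) (hn : 2 ≤ n)
    (G : En n × En n → En n) (hG : IsSemispray n G)
    (I : Set ℝ) (hIopen : IsOpen I) (hIconn : I.OrdConnected)
    (c : ℝ → En n) (hc : IsGeodesicOn n G c I)
    (ε : ℝ) (hε : 0 < ε) (V : ℝ × (Fin (n - 1) → ℝ) → En n)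
    (hV : IsGeodesicVariation n G c I (n - 1) ε V)
    (hVinj : Set.InjOn V (I ×ˢ cube (n - 1) ε))
    (hVopen : IsOpen (V '' (I ×ˢ cube (n - 1) ε)))
    (g : En n → ℝ × (Fin (n - 1) → ℝ))
    (hg : ContDiffOn ℝ (⊤ : ℕ∞) g (V '' (I ×ˢ cube (n - 1) ε)))
    (hgV : ∀ p ∈ I ×ˢ cube (n - 1) ε, g (V p) = p)
    (Z : En n → En n)
    (hZ : ∀ p ∈ I ×ˢ cube (n - 1) ε, Z (V p) = deriv (fun t' => V (t', p.2)) p.1) :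
    ∀ t ∈ I,
      deriv (fun t' => AZ n G Z (c t')) t
        + (Nc n G c t).comp (AZ n G Z (c t)) - (AZ n G Z (c t)).comp (Nc n G c t)
        + (AZ n G Z (c t)).comp (AZ n G Z (c t)) + Phi n G c t = 0 :=
  shape_operator_riccati_general n G hG I hIopen c hc ε hε V hV hVopen g hg hgV Z hZ
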